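/- Let r ≥ 1, n ≥ r+2, t ≥ n+1, and let T''' = ⟨rtn², r(tn²+n), r(t²n+1), r(t²n+n+1), t²n²−t²n−1⟩. Then the set of lengths of factorizations of x''' = r(t²n²+n) into atoms of T''' is exactly {r+1, n, t}. Explicitly, the only solutions in ℕ of α·rtn² + β·r(tn²+n) + γ·r(t²n+1) + δ·r(t²n+n+1) + ε·(t²n²−t²n−1) = r(t²n²+n) are (0,0,n,0,0), (t−1,1,0,0,0), and (0,0,0,1,r). -/

import Mathlib

/-- `a` is an atom of the additive submonoid `T` of `ℕ`: a nonzero element of `T`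
that is not a sum of two nonzero elements of `T`. -/
def NumAtom (T : AddSubmonoid ℕ) (a : ℕ) : Prop :=
  a ∈ T ∧ a ≠ 0 ∧ ¬ ∃ b c : ℕ, b ∈ T ∧ c ∈ T ∧ b ≠ 0 ∧ c ≠ 0 ∧ a = b + c

/-- `AS T x` is the set of lengths of factorizations of `x` into atoms of `T`:
the set of `m : ℕ` such that `x` is a sum of `m` atoms of `T`. -/
def AS (T : AddSubmonoid ℕ) (x : ℕ) : Set ℕ :=
  { m | ∃ s : Multiset ℕ, (∀ a ∈ s, NumAtom T a) ∧ Multiset.card s = m ∧ s.sum = x }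

/-!
Write `x = r(t²n² + n)` and let `α, …, ε` count the five generators in a representation of `x`.
Reducing modulo `n` gives `r(γ + δ) ≡ ε`; call the quotient `k`. Dividing the equation by `n`
and reducing modulo `tn` then gives `r(β + δ) + k ≡ r`, and size estimates (`ε < n`, and
`βn + (γ + δ)t ≤ tn`) turn both congruences into equalities. The resulting small system has
exactly the three solutions of the statement, of lengths `n`, `t` and `r + 1`.

Each generator `a` occurs in one of these three factorizations `f` together with a further entry
`w` (possibly another copy of `a`) that occurs in neither of the other two; splitting `a` into two
nonzero elements of the monoid would give a longer factorization of `x` still containing `w`, so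
every generator is an atom.
-/

def IsFactorization (S : Set ℕ) (x : ℕ) (g : Multiset ℕ) : Prop :=
  (∀ b ∈ g, b ∈ S) ∧ g.sum = x

theorem mem_of_numAtom_closure {S : Set ℕ} (hS : 0 ∉ S) {a : ℕ}
    (ha : NumAtom (AddSubmonoid.closure S) a) : a ∈ S := by
  obtain ⟨hmem, ha0, hirr⟩ := ha
  obtain ⟨l, hlS, rfl⟩ := AddSubmonoid.exists_list_of_mem_closure hmem
  rcases l with _ | ⟨b, _ | ⟨c, l⟩⟩
  · simp at ha0
  · simpa using hlS b (by simp)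
  · have hb : b ≠ 0 := fun h => hS (h ▸ hlS b (by simp))
    have hc : c ≠ 0 := fun h => hS (h ▸ hlS c (by simp))
    refine absurd ⟨b, (c :: l).sum, AddSubmonoid.subset_closure (hlS b (by simp)),
      AddSubmonoid.list_sum_mem _ fun y hy => AddSubmonoid.subset_closure (hlS y (by simp [hy])),
      hb, ?_, List.sum_cons⟩ hirr
    simp only [List.sum_cons]
    omega

theorem numAtom_closure_of_card_forced {S : Set ℕ} (hS : 0 ∉ S) {x a w : ℕ} {f : Multiset ℕ}
    (hf : IsFactorization S x f) (ha : a ∈ f) (hw : w ∈ f.erase a)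
    (hcard : ∀ g, IsFactorization S x g → w ∈ g → Multiset.card g = Multiset.card f) :
    NumAtom (AddSubmonoid.closure S) a := by
  have haS := hf.1 a ha
  refine ⟨AddSubmonoid.subset_closure haS, fun h => hS (h ▸ haS), ?_⟩
  rintro ⟨b, c, hb, hc, hb0, hc0, hab⟩
  obtain ⟨p, hpS, rfl⟩ := AddSubmonoid.exists_multiset_of_mem_closure hb
  obtain ⟨q, hqS, rfl⟩ := AddSubmonoid.exists_multiset_of_mem_closure hc
  have hp : 0 < Multiset.card p := Multiset.card_pos.mpr (by rintro rfl; simp at hb0)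
  have hq : 0 < Multiset.card q := Multiset.card_pos.mpr (by rintro rfl; simp at hc0)
  have hg : IsFactorization S x (f.erase a + p + q) := by
    refine ⟨?_, ?_⟩
    · simp only [Multiset.mem_add]
      rintro y ((hy | hy) | hy)
      exacts [hf.1 y (Multiset.mem_of_mem_erase hy), hpS y hy, hqS y hy]
    · rw [← hf.2, ← Multiset.sum_erase ha, Multiset.sum_add, Multiset.sum_add, hab]
      ring
  have hlen := hcard _ hg (by simp [hw])
  have herase := Multiset.card_erase_add_one ha
  simp only [Multiset.card_add] at hlen
  omega

theorem Multiset.sum_eq_and_card_eq_of_forall_mem_five {v₁ v₂ v₃ v₄ v₅ : ℕ}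
    (h₁₂ : v₁ < v₂) (h₂₃ : v₂ < v₃) (h₃₄ : v₃ < v₄) (h₄₅ : v₄ < v₅) {g : Multiset ℕ}
    (hg : ∀ b ∈ g, b ∈ ({v₁, v₂, v₃, v₄, v₅} : Set ℕ)) :
    g.sum = g.count v₁ * v₁ + g.count v₂ * v₂ + g.count v₃ * v₃ + g.count v₄ * v₄ +
      g.count v₅ * v₅ ∧
    Multiset.card g = g.count v₁ + g.count v₂ + g.count v₃ + g.count v₄ + g.count v₅ := by
  have hg' : ∀ b ∈ g, b ∈ ({v₁, v₂, v₃, v₄, v₅} : Finset ℕ) := by simpa using hg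
  rw [Finset.sum_multiset_count_of_subset g _ (fun b hb => hg' b (Multiset.mem_toFinset.mp hb)),
    ← Multiset.sum_count_eq_card hg']
  have : v₁ ≠ v₂ ∧ v₁ ≠ v₃ ∧ v₁ ≠ v₄ ∧ v₁ ≠ v₅ ∧ v₂ ≠ v₃ ∧ v₂ ≠ v₄ ∧ v₂ ≠ v₅ ∧ v₃ ≠ v₄ ∧
    v₃ ≠ v₅ ∧ v₄ ≠ v₅ := by omega
  simp [Finset.sum_insert, this, add_assoc]

theorem eq_cases_of_reduced {r n t α β γ δ ε k : ℤ} (hr : 0 < r) (ht : 0 < t)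
    (hα : 0 ≤ α) (hβ : 0 ≤ β) (hγ : 0 ≤ γ) (hδ : 0 ≤ δ) (hε : 0 ≤ ε) (hk : 0 ≤ k)
    (hmod_n : r * (γ + δ) - ε = n * k) (hmod_tn : r * (β + δ) + k = r)
    (hquot : r * (α + β) + t * (k + ε - r) = 0) :
    (α, β, γ, δ, ε) = (0, 0, n, 0, 0) ∨ (α, β, γ, δ, ε) = (t - 1, 1, 0, 0, 0) ∨
      (α, β, γ, δ, ε) = (0, 0, 0, 1, r) := by
  simp only [Prod.mk.injEq]
  have hβδ : β + δ ≤ 1 := by nlinarith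
  obtain hβδ | hβδ : β + δ = 0 ∨ β + δ = 1 := by omega
  · obtain ⟨rfl, rfl⟩ : β = 0 ∧ δ = 0 := by omega
    have hkr : k = r := by linarith
    rw [hkr] at hmod_n hquot
    obtain ⟨rfl, rfl⟩ : α = 0 ∧ ε = 0 := by
      constructor <;> nlinarith [mul_nonneg hr.le hα, mul_nonneg ht.le hε]
    have : r * γ = r * n := by linarith
    exact Or.inl ⟨rfl, rfl, mul_left_cancel₀ hr.ne' this, rfl, rfl⟩
  · rw [hβδ] at hmod_tn
    obtain rfl : k = 0 := by linarith
    have hεr : ε ≤ r := by nlinarith [mul_nonneg hr.le (add_nonneg hα hβ)]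
    have hγδ : γ + δ ≤ 1 := le_of_mul_le_mul_left (by linarith) hr
    obtain hγδ | hγδ : γ + δ = 0 ∨ γ + δ = 1 := by omega
    · obtain ⟨rfl, rfl⟩ : γ = 0 ∧ δ = 0 := by omega
      obtain rfl : β = 1 := by omega
      obtain rfl : ε = 0 := by linarith
      have : r * (α + 1) = r * t := by linarith
      have := mul_left_cancel₀ hr.ne' this
      exact Or.inr (Or.inl ⟨by omega, rfl, rfl, rfl, rfl⟩)
    · rw [hγδ] at hmod_n
      obtain rfl : ε = r := by linarith
      obtain ⟨rfl, rfl⟩ : α = 0 ∧ β = 0 := by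
        constructor <;> nlinarith
      exact Or.inr (Or.inr ⟨rfl, rfl, by omega, by omega, rfl⟩)

theorem size_bounds_of_sum_eq_int {r n t α β γ δ ε : ℤ} (hr : 1 ≤ r) (hn : r + 2 ≤ n)
    (ht : n + 1 ≤ t) (hα : 0 ≤ α) (hβ : 0 ≤ β) (hγ : 0 ≤ γ) (hδ : 0 ≤ δ) (hε : 0 ≤ ε)
    (h : α * (r * (t * n ^ 2)) + β * (r * (t * n ^ 2 + n)) + γ * (r * (t ^ 2 * n + 1)) +
      δ * (r * (t ^ 2 * n + n + 1)) + ε * (t ^ 2 * n ^ 2 - t ^ 2 * n - 1) =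
      r * (t ^ 2 * n ^ 2 + n)) :
    ε < n ∧ β * n + (γ + δ) * t ≤ t * n := by
  have hn0 : 0 < n := by omega
  have ht0 : 0 < t := by omega
  have htn : 0 < t * n := by positivity
  have hF : 0 ≤ t ^ 2 * n ^ 2 - t ^ 2 * n - 1 := by
    have : 2 ≤ n - 1 := by omega
    nlinarith [mul_le_mul_of_nonneg_left this (by positivity : 0 ≤ t ^ 2 * n)]
  have hx_lt : r * (t ^ 2 * n ^ 2 + n) < n * (t ^ 2 * n ^ 2 - t ^ 2 * n - 1) := by
    have h1 : t ^ 2 * n ^ 2 ≤ t ^ 2 * n ^ 2 * (n - 1 - r) :=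
      le_mul_of_one_le_right (by positivity) (by omega)
    have h2 : n * (1 + r) < n * n := mul_lt_mul_of_pos_left (by omega) hn0
    have h3 : n * n ≤ t ^ 2 * n ^ 2 := by nlinarith
    linarith
  constructor
  · by_contra! hnε
    linarith [mul_le_mul_of_nonneg_right hnε hF,
      mul_nonneg hα (by positivity : 0 ≤ r * (t * n ^ 2)),
      mul_nonneg hβ (by positivity : 0 ≤ r * (t * n ^ 2 + n)),
      mul_nonneg hγ (by positivity : 0 ≤ r * (t ^ 2 * n + 1)),
      mul_nonneg hδ (by positivity : 0 ≤ r * (t ^ 2 * n + n + 1))]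
  · have h1 : r * (t * n * (β * n + (γ + δ) * t)) ≤ r * (t ^ 2 * n ^ 2 + n) := by
      nlinarith [mul_nonneg hα (by positivity : 0 ≤ r * (t * n ^ 2)),
        mul_nonneg hβ (by positivity : 0 ≤ r * n), mul_nonneg hγ (by positivity : 0 ≤ r),
        mul_nonneg hδ (by positivity : 0 ≤ r * (n + 1)), mul_nonneg hε hF]
    have h2 : t * n * (β * n + (γ + δ) * t) ≤ t ^ 2 * n ^ 2 + n :=
      le_of_mul_le_mul_left h1 (by omega)
    have h3 : t ^ 2 * n ^ 2 + n < t * n * (t * n + 1) := by nlinarith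
    have : β * n + (γ + δ) * t < t * n + 1 := lt_of_mul_lt_mul_left (h2.trans_lt h3) htn.le
    omega

theorem eq_cases_of_sum_eq_int {r n t α β γ δ ε : ℤ} (hr : 1 ≤ r) (hn : r + 2 ≤ n)
    (ht : n + 1 ≤ t) (hα : 0 ≤ α) (hβ : 0 ≤ β) (hγ : 0 ≤ γ) (hδ : 0 ≤ δ) (hε : 0 ≤ ε)
    (h : α * (r * (t * n ^ 2)) + β * (r * (t * n ^ 2 + n)) + γ * (r * (t ^ 2 * n + 1)) +
      δ * (r * (t ^ 2 * n + n + 1)) + ε * (t ^ 2 * n ^ 2 - t ^ 2 * n - 1) =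
      r * (t ^ 2 * n ^ 2 + n)) :
    (α, β, γ, δ, ε) = (0, 0, n, 0, 0) ∨ (α, β, γ, δ, ε) = (t - 1, 1, 0, 0, 0) ∨
      (α, β, γ, δ, ε) = (0, 0, 0, 1, r) := by
  obtain ⟨hε_lt, hB⟩ := size_bounds_of_sum_eq_int hr hn ht hα hβ hγ hδ hε h
  have hn0 : 0 < n := by omega
  have htn : 0 < t * n := by nlinarith
  -- `k` is the quotient of `r(γ + δ) - ε` by `n`, read off from `h`.
  set k := r * t ^ 2 * n + r - r * t * n * (α + β) - r * β - r * t ^ 2 * (γ + δ) - r * δ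
    - ε * t ^ 2 * (n - 1)
  have hmod_n : r * (γ + δ) - ε = n * k := by linear_combination h
  have hmod_tn : r * (β + δ) + k - r = -(t * n) * (r * (α + β) + t * (k + ε - r)) := by
    linear_combination (-t ^ 2) * hmod_n
  have hk : 0 ≤ k := by nlinarith
  have hlt : r * (β + δ) + k - r < t * n := by
    have h1 : n * (r * (β + δ) + k - r) = r * (β * n + δ * (n + 1) + γ) - ε - n * r := by
      linear_combination (-1 : ℤ) * hmod_n
    have h2 : δ * (n + 1) + γ ≤ (γ + δ) * t := by
      nlinarith [mul_le_mul_of_nonneg_left ht hδ, le_mul_of_one_le_right hγ (by omega : 1 ≤ t)]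
    have h3 : r * (β * n + δ * (n + 1) + γ) ≤ r * (t * n) :=
      mul_le_mul_of_nonneg_left (by linarith) (by omega)
    have h4 : r * (t * n) < n * (t * n) := mul_lt_mul_of_pos_right (by omega) htn
    have : n * (r * (β + δ) + k - r) < n * (t * n) := by
      nlinarith [mul_pos hn0 (by omega : (0 : ℤ) < r)]
    exact lt_of_mul_lt_mul_left this hn0.le
  have hgt : -(t * n) < r * (β + δ) + k - r := by
    nlinarith [mul_nonneg (by omega : (0 : ℤ) ≤ r) (add_nonneg hβ hδ)]
  have hj : r * (β + δ) + k - r = 0 :=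
    Int.eq_zero_of_abs_lt_dvd (neg_dvd.mp ⟨_, hmod_tn⟩) (abs_lt.mpr ⟨hgt, hlt⟩)
  have hq : r * (α + β) + t * (k + ε - r) = 0 := by
    simpa [hj, htn.ne'] using hmod_tn
  exact eq_cases_of_reduced (by omega) (by omega) hα hβ hγ hδ hε hk hmod_n (by linarith) hq

theorem natCast_sub_sub_one {n t : ℕ} (hn : 2 ≤ n) (ht : 1 ≤ t) :
    ((t ^ 2 * n ^ 2 - t ^ 2 * n - 1 : ℕ) : ℤ) = t ^ 2 * n ^ 2 - t ^ 2 * n - 1 := by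
  have : t ^ 2 * n + 1 ≤ t ^ 2 * n ^ 2 := by
    have : 2 * (t ^ 2 * n) ≤ n * (t ^ 2 * n) := Nat.mul_le_mul_right _ hn
    nlinarith [Nat.one_le_pow 2 t ht, Nat.mul_le_mul (Nat.one_le_pow 2 t ht) (by omega : 1 ≤ n)]
  rw [Nat.sub_sub, Nat.cast_sub this]
  push_cast
  ring

theorem eq_cases_of_sum_eq {r n t α β γ δ ε : ℕ} (hr : 1 ≤ r) (hn : r + 2 ≤ n) (ht : n + 1 ≤ t)
    (h : α * (r * (t * n ^ 2)) + β * (r * (t * n ^ 2 + n)) + γ * (r * (t ^ 2 * n + 1)) +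
      δ * (r * (t ^ 2 * n + n + 1)) + ε * (t ^ 2 * n ^ 2 - t ^ 2 * n - 1) =
      r * (t ^ 2 * n ^ 2 + n)) :
    (α, β, γ, δ, ε) = (0, 0, n, 0, 0) ∨ (α, β, γ, δ, ε) = (t - 1, 1, 0, 0, 0) ∨
      (α, β, γ, δ, ε) = (0, 0, 0, 1, r) := by
  have hz := congrArg (Nat.cast : ℕ → ℤ) h
  push_cast [natCast_sub_sub_one (n := n) (t := t) (by omega) (by omega)] at hz
  have := eq_cases_of_sum_eq_int (by omega) (by omega) (by omega) (by omega) (by omega)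
    (by omega) (by omega) (by omega) hz
  simp only [Prod.mk.injEq] at this ⊢
  omega

def gens (r n t : ℕ) : Set ℕ :=
  {r * (t * n ^ 2), r * (t * n ^ 2 + n), r * (t ^ 2 * n + 1), r * (t ^ 2 * n + n + 1),
    t ^ 2 * n ^ 2 - t ^ 2 * n - 1}

theorem gens_lt_chain {r n t : ℕ} (hr : 1 ≤ r) (hn : r + 2 ≤ n) (ht : n + 1 ≤ t) :
    0 < r * (t * n ^ 2) ∧ r * (t * n ^ 2) < r * (t * n ^ 2 + n) ∧
      r * (t * n ^ 2 + n) < r * (t ^ 2 * n + 1) ∧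
      r * (t ^ 2 * n + 1) < r * (t ^ 2 * n + n + 1) ∧
      r * (t ^ 2 * n + n + 1) < t ^ 2 * n ^ 2 - t ^ 2 * n - 1 := by
  refine ⟨Nat.mul_pos (by omega) (Nat.mul_pos (by omega) (pow_pos (by omega) 2)),
    Nat.mul_lt_mul_of_pos_left (by omega) (by omega), Nat.mul_lt_mul_of_pos_left ?_ (by omega),
    Nat.mul_lt_mul_of_pos_left (by omega) (by omega), ?_⟩
  · have : (n + 1) * (t * n) ≤ t * (t * n) := Nat.mul_le_mul_right _ ht
    nlinarith
  · have h1 : (r + 2) * (t ^ 2 * n) ≤ n * (t ^ 2 * n) := Nat.mul_le_mul_right _ hn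
    have h2 : (r + 2) * n ≤ t ^ 2 * n := Nat.mul_le_mul_right _ (by nlinarith)
    have : r * (t ^ 2 * n + n + 1) + (t ^ 2 * n + 1) < t ^ 2 * n ^ 2 := by nlinarith
    omega

theorem eq_cases_of_isFactorization {r n t : ℕ} (hr : 1 ≤ r) (hn : r + 2 ≤ n) (ht : n + 1 ≤ t)
    {g : Multiset ℕ} (hg : IsFactorization (gens r n t) (r * (t ^ 2 * n ^ 2 + n)) g) :
    (g.count (r * (t * n ^ 2)), g.count (r * (t * n ^ 2 + n)), g.count (r * (t ^ 2 * n + 1)),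
        g.count (r * (t ^ 2 * n + n + 1)), g.count (t ^ 2 * n ^ 2 - t ^ 2 * n - 1),
        Multiset.card g) = (0, 0, n, 0, 0, n) ∨
      (g.count (r * (t * n ^ 2)), g.count (r * (t * n ^ 2 + n)), g.count (r * (t ^ 2 * n + 1)),
        g.count (r * (t ^ 2 * n + n + 1)), g.count (t ^ 2 * n ^ 2 - t ^ 2 * n - 1),
        Multiset.card g) = (t - 1, 1, 0, 0, 0, t) ∨
      (g.count (r * (t * n ^ 2)), g.count (r * (t * n ^ 2 + n)), g.count (r * (t ^ 2 * n + 1)),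
        g.count (r * (t ^ 2 * n + n + 1)), g.count (t ^ 2 * n ^ 2 - t ^ 2 * n - 1),
        Multiset.card g) = (0, 0, 0, 1, r, r + 1) := by
  obtain ⟨-, h₁₂, h₂₃, h₃₄, h₄₅⟩ := gens_lt_chain hr hn ht
  obtain ⟨hsum, hcard⟩ := Multiset.sum_eq_and_card_eq_of_forall_mem_five h₁₂ h₂₃ h₃₄ h₄₅ hg.1
  have := eq_cases_of_sum_eq hr hn ht (hsum.symm.trans hg.2)
  simp only [Prod.mk.injEq] at this ⊢
  omega

theorem isFactorization_gens (r n t : ℕ) (hn : 2 ≤ n) (ht : 1 ≤ t) :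
    IsFactorization (gens r n t) (r * (t ^ 2 * n ^ 2 + n))
        (Multiset.replicate n (r * (t ^ 2 * n + 1))) ∧
      IsFactorization (gens r n t) (r * (t ^ 2 * n ^ 2 + n))
        (r * (t * n ^ 2 + n) ::ₘ Multiset.replicate (t - 1) (r * (t * n ^ 2))) ∧
      IsFactorization (gens r n t) (r * (t ^ 2 * n ^ 2 + n))
        (r * (t ^ 2 * n + n + 1) ::ₘ Multiset.replicate r (t ^ 2 * n ^ 2 - t ^ 2 * n - 1)) := by
  have hmem : ∀ {b k c}, b ∈ Multiset.replicate k c → c ∈ gens r n t → b ∈ gens r n t :=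
    fun hb hc => Multiset.eq_of_mem_replicate hb ▸ hc
  refine ⟨⟨fun b hb => hmem hb (by simp [gens]), ?_⟩,
    ⟨Multiset.forall_mem_cons.mpr ⟨by simp [gens], fun b hb => hmem hb (by simp [gens])⟩, ?_⟩,
    ⟨Multiset.forall_mem_cons.mpr ⟨by simp [gens], fun b hb => hmem hb (by simp [gens])⟩, ?_⟩⟩
  · rw [Multiset.sum_replicate, smul_eq_mul]
    ring
  · obtain ⟨t, rfl⟩ : ∃ s, t = s + 1 := ⟨t - 1, by omega⟩
    rw [Multiset.sum_cons, Multiset.sum_replicate, smul_eq_mul, Nat.add_sub_cancel]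
    ring
  · rw [Multiset.sum_cons, Multiset.sum_replicate, smul_eq_mul]
    zify
    rw [natCast_sub_sub_one hn ht]
    ring

theorem card_eq_of_mem_of_mem {r n t : ℕ} (hr : 1 ≤ r) (hn : r + 2 ≤ n) (ht : n + 1 ≤ t)
    {f g : Multiset ℕ} {w : ℕ} (hf : IsFactorization (gens r n t) (r * (t ^ 2 * n ^ 2 + n)) f)
    (hg : IsFactorization (gens r n t) (r * (t ^ 2 * n ^ 2 + n)) g) (hwf : w ∈ f) (hwg : w ∈ g) :
    Multiset.card g = Multiset.card f := by
  have hwf' := Multiset.count_pos.mpr hwf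
  have hwg' := Multiset.count_pos.mpr hwg
  have hw := hf.1 w hwf
  simp only [gens, Set.mem_insert_iff, Set.mem_singleton_iff] at hw
  rcases eq_cases_of_isFactorization hr hn ht hf with hf | hf | hf <;>
    rcases eq_cases_of_isFactorization hr hn ht hg with hg | hg | hg <;>
    simp only [Prod.mk.injEq] at hf hg <;>
    rcases hw with rfl | rfl | rfl | rfl | rfl <;>
    omega

theorem numAtom_closure_gens_iff {r n t : ℕ} (hr : 1 ≤ r) (hn : r + 2 ≤ n) (ht : n + 1 ≤ t)
    {a : ℕ} : NumAtom (AddSubmonoid.closure (gens r n t)) a ↔ a ∈ gens r n t := by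
  obtain ⟨h₀, h₁₂, h₂₃, h₃₄, h₄₅⟩ := gens_lt_chain hr hn ht
  have hS : 0 ∉ gens r n t := by
    simp only [gens, Set.mem_insert_iff, Set.mem_singleton_iff]
    omega
  refine ⟨mem_of_numAtom_closure hS, ?_⟩
  obtain ⟨hf₁, hf₂, hf₃⟩ := isFactorization_gens r n t (by omega) (by omega)
  have key : ∀ {f w}, IsFactorization (gens r n t) (r * (t ^ 2 * n ^ 2 + n)) f → a ∈ f →
      w ∈ f.erase a → NumAtom (AddSubmonoid.closure (gens r n t)) a :=
    fun hf ha hw => numAtom_closure_of_card_forced hS hf ha hw fun _ hg hwg =>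
      card_eq_of_mem_of_mem hr hn ht hf hg (Multiset.mem_of_mem_erase hw) hwg
  have mem_rep : ∀ {k c : ℕ}, 0 < k → c ∈ Multiset.replicate k c :=
    fun hk => Multiset.mem_replicate.mpr ⟨by omega, rfl⟩
  simp only [gens, Set.mem_insert_iff, Set.mem_singleton_iff]
  rintro (rfl | rfl | rfl | rfl | rfl)
  · exact key hf₂ (Multiset.mem_cons_of_mem (mem_rep (by omega)))
      ((Multiset.mem_erase_of_ne h₁₂.ne').mpr (Multiset.mem_cons_self _ _))
  · exact key hf₂ (Multiset.mem_cons_self _ _)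
      ((Multiset.mem_erase_of_ne h₁₂.ne).mpr (Multiset.mem_cons_of_mem (mem_rep (by omega))))
  · exact key hf₁ (mem_rep (by omega))
      (by
        rw [← Multiset.count_pos, Multiset.count_erase_self, Multiset.count_replicate_self]
        omega)
  · exact key hf₃ (Multiset.mem_cons_self _ _)
      ((Multiset.mem_erase_of_ne h₄₅.ne').mpr (Multiset.mem_cons_of_mem (mem_rep (by omega))))
  · exact key hf₃ (Multiset.mem_cons_of_mem (mem_rep (by omega)))
      ((Multiset.mem_erase_of_ne h₄₅.ne).mpr (Multiset.mem_cons_self _ _))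

theorem stmt_16 (r n t : ℕ) (hr : 1 ≤ r) (hn : r + 2 ≤ n) (ht : n + 1 ≤ t) :
    (∀ α β γ δ ε : ℕ,
      α * (r * (t * n ^ 2)) + β * (r * (t * n ^ 2 + n)) + γ * (r * (t ^ 2 * n + 1)) +
          δ * (r * (t ^ 2 * n + n + 1)) + ε * (t ^ 2 * n ^ 2 - t ^ 2 * n - 1) =
        r * (t ^ 2 * n ^ 2 + n) →
      (α, β, γ, δ, ε) = (0, 0, n, 0, 0) ∨ (α, β, γ, δ, ε) = (t - 1, 1, 0, 0, 0) ∨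
        (α, β, γ, δ, ε) = (0, 0, 0, 1, r)) ∧
    AS (AddSubmonoid.closure
        {r * (t * n ^ 2), r * (t * n ^ 2 + n), r * (t ^ 2 * n + 1),
          r * (t ^ 2 * n + n + 1), t ^ 2 * n ^ 2 - t ^ 2 * n - 1})
        (r * (t ^ 2 * n ^ 2 + n)) = {r + 1, n, t} := by
  refine ⟨fun α β γ δ ε h => eq_cases_of_sum_eq hr hn ht h, ?_⟩
  change AS (AddSubmonoid.closure (gens r n t)) _ = _
  have hatom := fun a => numAtom_closure_gens_iff hr hn ht (a := a)
  obtain ⟨hf₁, hf₂, hf₃⟩ := isFactorization_gens r n t (by omega) (by omega)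
  ext m
  simp only [AS, Set.mem_ofPred_eq, Set.mem_insert_iff, Set.mem_singleton_iff]
  constructor
  · rintro ⟨s, hs, rfl, hsum⟩
    rcases eq_cases_of_isFactorization hr hn ht ⟨fun a ha => (hatom a).mp (hs a ha), hsum⟩
      with h | h | h <;> simp only [Prod.mk.injEq] at h <;> omega
  · rintro (rfl | rfl | rfl)
    · exact ⟨_, fun a ha => (hatom a).mpr (hf₃.1 a ha), by simp, hf₃.2⟩
    · exact ⟨_, fun a ha => (hatom a).mpr (hf₁.1 a ha), by simp, hf₁.2⟩
    · exact ⟨_, fun a ha => (hatom a).mpr (hf₂.1 a ha), by simp; omega, hf₂.2⟩
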